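/- arXiv:2302.06323 — 2 statements merged into one kernel-verified Lean document; each statement's English description precedes it below -/
import Mathlib

section
/- Every polynomial invariant P ∈ ℚ[x,y,z] of the sequence n ↦ (2^n, 4^n, 8^n) lies in the ideal generated by x² − y and x³ − z. That is, if P(2^n, 4^n, 8^n) = 0 for all n ∈ ℕ, then P ∈ ⟨x² − y, x³ − z⟩. -/
/-!
Substituting `(x, y, z) ↦ (t, t², t³)` turns `P` into a univariate polynomial `Q` with
`Q(2ⁿ) = P(2ⁿ, 4ⁿ, 8ⁿ) = 0` for every `n`; having infinitely many roots, `Q = 0`. On the other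
hand the substitution `y ↦ x², z ↦ x³` does not change `P` modulo `⟨x² − y, x³ − z⟩`, and it sends
`P` to `Q(x) = 0`.
-/

open MvPolynomial

theorem MvPolynomial.sub_aeval_mem_of_forall_X_sub_mem {σ R : Type*} [CommRing R]
    {I : Ideal (MvPolynomial σ R)} {f : σ → MvPolynomial σ R} (hf : ∀ i, X i - f i ∈ I)
    (P : MvPolynomial σ R) : P - aeval f P ∈ I := by
  rw [← Ideal.Quotient.eq_zero_iff_mem, map_sub, sub_eq_zero]
  suffices (Ideal.Quotient.mkₐ R I).comp (aeval f) = Ideal.Quotient.mkₐ R I from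
    (DFunLike.congr_fun this P).symm
  refine MvPolynomial.algHom_ext fun i => ?_
  simpa using (Ideal.Quotient.eq.mpr (hf i)).symm

theorem Polynomial.eq_zero_of_forall_eval_pow_eq_zero {R : Type*} [CommRing R] [IsDomain R]
    {a : R} (ha : Function.Injective (a ^ · : ℕ → R)) {Q : Polynomial R}
    (hQ : ∀ n : ℕ, Q.eval (a ^ n) = 0) : Q = 0 :=
  Q.eq_zero_of_infinite_isRoot <| (Set.infinite_range_of_injective ha).mono <| by
    rintro _ ⟨n, rfl⟩; exact hQ n

/-- Every polynomial invariant of the sequence `n ↦ (2ⁿ, 4ⁿ, 8ⁿ)` lies in the ideal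
generated by `x² − y` and `x³ − z`. -/
theorem invariant_ideal_of_loop_248 (P : MvPolynomial (Fin 3) ℚ)
    (hP : ∀ n : ℕ, eval (![(2 : ℚ) ^ n, 4 ^ n, 8 ^ n]) P = 0) :
    P ∈ Ideal.span {((X 0) ^ 2 - X 1 : MvPolynomial (Fin 3) ℚ),
        ((X 0) ^ 3 - X 2 : MvPolynomial (Fin 3) ℚ)} := by
  set I := Ideal.span {((X 0) ^ 2 - X 1 : MvPolynomial (Fin 3) ℚ), (X 0) ^ 3 - X 2}
  set Q : Polynomial ℚ := aeval ![Polynomial.X, Polynomial.X ^ 2, Polynomial.X ^ 3] P with hQ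
  have hQ_zero : Q = 0 := by
    refine Polynomial.eq_zero_of_forall_eval_pow_eq_zero
      (pow_right_injective₀ two_pos (by norm_num)) fun n => ?_
    rw [← Polynomial.coe_aeval_eq_eval, hQ, comp_aeval_apply, ← hP n, ← coe_aeval_eq_eval]
    refine congrArg (aeval · P) (funext fun i => ?_)
    fin_cases i <;> simp
    all_goals rw [pow_right_comm]; norm_num
  have hQ_lift : aeval ![(X 0 : MvPolynomial (Fin 3) ℚ), X 0 ^ 2, X 0 ^ 3] P =
      Polynomial.aeval (X 0) Q := by
    rw [hQ, comp_aeval_apply]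
    refine congrArg (aeval · P) (funext fun i => ?_)
    fin_cases i <;> simp
  have hX_sub : ∀ i, X i - ![(X 0 : MvPolynomial (Fin 3) ℚ), X 0 ^ 2, X 0 ^ 3] i ∈ I := by
    intro i
    fin_cases i
    · simp
    all_goals
      rw [← neg_sub]
      exact neg_mem (Ideal.subset_span (by simp))
  have hP_sub := sub_aeval_mem_of_forall_X_sub_mem hX_sub P
  rwa [hQ_lift, hQ_zero, map_zero, sub_zero] at hP_sub
end

section
/- The equation x³ + y³ = 1 has exactly two rational solutions: (1,0) and (0,1). -/
/-! Euler's case `n = 3` of Fermat's Last Theorem (`fermatLastTheoremThree`) forces `x = 0` or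
`y = 0`, and then the other coordinate is a rational cube root of `1`, hence equal to `1`. -/

theorem Rat.eq_zero_or_eq_zero_of_pow_three_add_pow_three_eq_one {x y : ℚ}
    (h : x ^ 3 + y ^ 3 = 1) : x = 0 ∨ y = 0 := by
  by_contra! hxy
  exact fermatLastTheoremFor_iff_rat.mp fermatLastTheoremThree x y 1 hxy.1 hxy.2 one_ne_zero
    (by rw [h, one_pow])

theorem Rat.pow_three_add_pow_three_eq_one_iff {x y : ℚ} :
    x ^ 3 + y ^ 3 = 1 ↔ x = 1 ∧ y = 0 ∨ x = 0 ∧ y = 1 := by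
  have cube_eq_one {a : ℚ} : a ^ 3 = 1 ↔ a = 1 := by
    simpa only [one_pow] using (Odd.pow_inj (by decide : Odd 3) : a ^ 3 = 1 ^ 3 ↔ a = 1)
  constructor
  · intro h
    rcases eq_zero_or_eq_zero_of_pow_three_add_pow_three_eq_one h with rfl | rfl
    · exact .inr ⟨rfl, cube_eq_one.mp (by simpa using h)⟩
    · exact .inl ⟨cube_eq_one.mp (by simpa using h), rfl⟩
  · rintro (⟨rfl, rfl⟩ | ⟨rfl, rfl⟩) <;> norm_num

/-- The equation `x³ + y³ = 1` has exactly two rational solutions: `(1,0)` and `(0,1)`. -/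
theorem rational_points_cubic_fermat :
    {p : ℚ × ℚ | p.1 ^ 3 + p.2 ^ 3 = 1} = {((1 : ℚ), (0 : ℚ)), ((0 : ℚ), (1 : ℚ))} := by
  ext ⟨x, y⟩
  simp only [Set.mem_ofPred_eq, Set.mem_insert_iff, Set.mem_singleton_iff, Prod.mk.injEq,
    Rat.pow_three_add_pow_three_eq_one_iff]
end
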